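/- Let a > 2, λ > 0 and b > 0 be real numbers. Then the integral over the plane of the path-loss function weighted by the inhomogeneous density factor equals ∫_{x ∈ ℝ², ‖x‖ ≥ b} ‖x‖^{−a} (1 − exp(−π λ ‖x‖²)) dx = 2π b^{2−a}/(a−2) − π (πλ)^{a/2−1} ∫_{πλb²}^{∞} t^{−a/2} e^{−t} dt. -/

import Mathlib

open MeasureTheory Real

/-! In polar coordinates the integral becomes `2π ∫_b^∞ r^(1-a) (1 - exp (-c r²)) dr` with
`c = πλ`. The part without the exponential is elementary, and the substitution `t = c r²` turns
the part with the exponential into the incomplete gamma integral. -/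

open Set Metric

section PolarCoordinates

variable {E F : Type*} [NormedAddCommGroup E] [NormedSpace ℝ E] [FiniteDimensional ℝ E]
  [Nontrivial E] [MeasurableSpace E] [BorelSpace E] [NormedAddCommGroup F] [NormedSpace ℝ F]

lemma setIntegral_fun_norm_ge_addHaar (μ : Measure E) [μ.IsAddHaarMeasure] (f : ℝ → F) {b : ℝ}
    (hb : 0 ≤ b) :
    ∫ x in {x : E | b ≤ ‖x‖}, f ‖x‖ ∂μ =
      Module.finrank ℝ E • μ.real (ball 0 1) •
        ∫ y in Ioi b, y ^ (Module.finrank ℝ E - 1) • f y := by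
  have hS : MeasurableSet {x : E | b ≤ ‖x‖} := measurableSet_le measurable_const measurable_norm
  have hIoi : (Ioi 0 ∩ Ici b : Set ℝ) =ᵐ[volume] Ioi b := by
    simpa [Ioi_inter_Ioi, hb] using
      (Filter.EventuallyEq.refl _ (Ioi (0 : ℝ))).inter (Ioi_ae_eq_Ici (a := b) (μ := volume)).symm
  rw [← integral_indicator hS, show ({x : E | b ≤ ‖x‖}.indicator fun x ↦ f ‖x‖) =
      fun x ↦ (Ici b).indicator f ‖x‖ from rfl, integral_fun_norm_addHaar,
    ← indicator_smul, setIntegral_indicator measurableSet_Ici, setIntegral_congr_set hIoi]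

lemma setIntegral_fun_norm_ge_euclideanSpace_fin_two (f : ℝ → F) {b : ℝ} (hb : 0 ≤ b) :
    ∫ x in {x : EuclideanSpace ℝ (Fin 2) | b ≤ ‖x‖}, f ‖x‖ = (2 * π) • ∫ y in Ioi b, y • f y := by
  rw [setIntegral_fun_norm_ge_addHaar _ f hb, finrank_euclideanSpace_fin, measureReal_def,
    EuclideanSpace.volume_ball_fin_two]
  simp [mul_smul, pi_pos.le, ← Nat.cast_smul_eq_nsmul ℝ]

end PolarCoordinates

lemma integral_Ioi_comp_const_mul_sq {F : Type*} [NormedAddCommGroup F] [NormedSpace ℝ F]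
    (g : ℝ → F) {c b : ℝ} (hc : 0 < c) (hb : 0 ≤ b) :
    ∫ t in Ioi (c * b ^ 2), g t = ∫ r in Ioi b, (2 * c * r) • g (c * r ^ 2) := by
  have himage : (fun r ↦ c * r ^ 2) '' Ioi b = Ioi (c * b ^ 2) := by
    ext t
    constructor
    · rintro ⟨r, hr, rfl⟩
      have : b ^ 2 < r ^ 2 := by nlinarith [mem_Ioi.1 hr]
      exact mul_lt_mul_of_pos_left this hc
    · intro ht
      refine ⟨√(t / c), (lt_sqrt hb).2 ((lt_div_iff₀' hc).2 ht), ?_⟩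
      have : 0 ≤ t / c := div_nonneg (by nlinarith [mem_Ioi.1 ht]) hc.le
      simp only
      rw [sq_sqrt this]
      field_simp
  have hderiv (r : ℝ) (_ : r ∈ Ioi b) :
      HasDerivWithinAt (fun r ↦ c * r ^ 2) (2 * c * r) (Ioi b) r := by
    simpa [mul_comm, mul_assoc, mul_left_comm] using
      ((hasDerivAt_pow 2 r).const_mul c).hasDerivWithinAt
  have hinj : InjOn (fun r ↦ c * r ^ 2) (Ioi b) := fun r hr s hs h ↦
    (pow_left_inj₀ (hb.trans hr.le) (hb.trans hs.le) two_ne_zero).1 ((mul_right_inj' hc.ne').1 h)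
  rw [← himage, integral_image_eq_integral_abs_deriv_smul measurableSet_Ioi hderiv hinj]
  refine setIntegral_congr_fun measurableSet_Ioi fun r hr ↦ ?_
  have : 0 < r := hb.trans_lt hr
  rw [abs_of_pos (by positivity)]

lemma integral_Ioi_rpow_mul_exp_neg_const_mul_sq (a : ℝ) {c b : ℝ} (hc : 0 < c) (hb : 0 ≤ b) :
    ∫ r in Ioi b, r ^ (1 - a) * exp (-(c * r ^ 2)) =
      c ^ (a / 2 - 1) / 2 * ∫ t in Ioi (c * b ^ 2), t ^ (-(a / 2)) * exp (-t) := by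
  rw [integral_Ioi_comp_const_mul_sq _ hc hb, ← integral_const_mul]
  refine setIntegral_congr_fun measurableSet_Ioi fun r hr ↦ ?_
  have hr0 : 0 < r := hb.trans_lt hr
  have hsq : (r ^ 2) ^ (-(a / 2)) = (r ^ a)⁻¹ := by
    rw [← rpow_natCast, ← rpow_mul hr0.le, Nat.cast_ofNat, show (2 : ℝ) * -(a / 2) = -a by ring,
      rpow_neg hr0.le]
  rw [smul_eq_mul, mul_rpow hc.le (by positivity), hsq, rpow_sub hr0, rpow_sub hc, rpow_neg hc.le,
    rpow_one, rpow_one]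
  field_simp

lemma integral_Ioi_mul_rpow_mul_one_sub_exp {a c b : ℝ} (ha : 2 < a) (hc : 0 < c) (hb : 0 < b) :
    ∫ r in Ioi b, r * (r ^ (-a) * (1 - exp (-(c * r ^ 2)))) =
      b ^ (2 - a) / (a - 2) -
        c ^ (a / 2 - 1) / 2 * ∫ t in Ioi (c * b ^ 2), t ^ (-(a / 2)) * exp (-t) := by
  have hpow : IntegrableOn (fun r : ℝ ↦ r ^ (1 - a)) (Ioi b) :=
    integrableOn_Ioi_rpow_of_lt (by linarith) hb
  have hexp : IntegrableOn (fun r : ℝ ↦ r ^ (1 - a) * exp (-(c * r ^ 2))) (Ioi b) := by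
    refine hpow.mul_bdd (c := 1) (by fun_prop) (.of_forall fun r ↦ ?_)
    rw [norm_of_nonneg (exp_nonneg _), exp_le_one_iff, neg_nonpos]
    positivity
  have hsplit : EqOn (fun r ↦ r * (r ^ (-a) * (1 - exp (-(c * r ^ 2)))))
      (fun r ↦ r ^ (1 - a) - r ^ (1 - a) * exp (-(c * r ^ 2))) (Ioi b) := fun r hr ↦ by
    dsimp only
    rw [show 1 - a = -a + 1 by ring, rpow_add_one (hb.trans hr).ne']
    ring
  rw [setIntegral_congr_fun measurableSet_Ioi hsplit, integral_sub hpow hexp,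
    integral_Ioi_rpow_of_lt (by linarith) hb,
    integral_Ioi_rpow_mul_exp_neg_const_mul_sq a hc hb.le, show 1 - a + 1 = 2 - a by ring,
    neg_div, ← div_neg, neg_sub]

/-- Planar integral identity of Lemma 1: mean BS-to-BS interference via Campbell's formula. -/
theorem planar_pathloss_inhomogeneous_integral
    (a lam b : ℝ) (ha : 2 < a) (hlam : 0 < lam) (hb : 0 < b) :
    (∫ x in {x : EuclideanSpace ℝ (Fin 2) | b ≤ ‖x‖},
        ‖x‖ ^ (-a) * (1 - Real.exp (-(π * lam * ‖x‖ ^ 2)))) =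
      2 * π * b ^ (2 - a) / (a - 2) -
        π * (π * lam) ^ (a / 2 - 1) *
          ∫ t in Set.Ioi (π * lam * b ^ 2), t ^ (-(a / 2)) * Real.exp (-t) := by
  rw [setIntegral_fun_norm_ge_euclideanSpace_fin_two
      (fun r ↦ r ^ (-a) * (1 - exp (-(π * lam * r ^ 2)))) hb.le]
  simp only [smul_eq_mul]
  rw [integral_Ioi_mul_rpow_mul_one_sub_exp ha (mul_pos pi_pos hlam) hb]
  ring
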